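/- Let G be a weighted concurrent game with players Agt = {A_1,…,A_n} and mean-payoff objectives, and fix parameters k, t ∈ ℕ and r ∈ ℚ. There is a (k,t,r)-robust equilibrium in G if, and only if, for the multidimensional mean-payoff objective on the deviator game D(G) given by the weight function v with index sets I = [1,n] ∪ [2n+1,3n] and J = [n+1,2n] ∪ [3n+1,4n], there exists a payoff vector p ∈ ℝ^Agt such that Eve can ensure in D(G) the threshold u ∈ ℝ^{4n} defined by u_i = p(A_i) − r, u_{n+i} = −p(A_i), u_{2n+i} = p(A_i), and u_{3n+i} = −p(A_i) for all i ∈ [1,n]. -/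
import Mathlib


open Filter

section Defs

variable {Stat Agt Act : Type}

/-- A weighted concurrent game: finite sets of states/players/actions are imposed
via `Fintype` assumptions in the theorems. -/
structure CGame (Stat Agt Act : Type) where
  s0 : Stat
  Tab : Stat → (Agt → Act) → Stat
  w : Agt → Stat → ℤ

/-- A history: an initial state followed by a finite alternating list of moves and states. -/
abbrev Hist (Stat Agt Act : Type) := Stat × List ((Agt → Act) × Stat)

abbrev Strategy (Stat Agt Act : Type) := Hist Stat Agt Act → Act

abbrev Profile (Stat Agt Act : Type) := Agt → Strategy Stat Agt Act

/-- A play: an infinite alternating sequence of states and moves. -/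
structure Play (Stat Agt Act : Type) where
  state : ℕ → Stat
  move : ℕ → Agt → Act

/-- The prefix `ρ_{≤ m}` of a play: the history containing states `0..m` and moves `0..m-1`. -/
def Play.pref (ρ : Play Stat Agt Act) (m : ℕ) : Hist Stat Agt Act :=
  (ρ.state 0, (List.range m).map fun j => (ρ.move j, ρ.state (j + 1)))

/-- `ρ` respects the transition function of `G` (it is a play of `G`). -/
def IsPlay (G : CGame Stat Agt Act) (ρ : Play Stat Agt Act) : Prop :=
  ∀ j, ρ.state (j + 1) = G.Tab (ρ.state j) (ρ.move j)

/-- The deviators from move `a` to move `a'`. -/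
def devMove (a a' : Agt → Act) : Set Agt := {A | a A ≠ a' A}

/-- The deviators of a play with respect to a strategy profile. -/
def devPlay (σ : Profile Stat Agt Act) (ρ : Play Stat Agt Act) : Set Agt :=
  ⋃ i : ℕ, devMove (ρ.move i) fun A => σ A (ρ.pref i)

/-- The deviators of the prefix `ρ_{≤ i}` with respect to a strategy profile. -/
def devPref (σ : Profile Stat Agt Act) (ρ : Play Stat Agt Act) (i : ℕ) : Set Agt :=
  ⋃ j ∈ Finset.range i, devMove (ρ.move j) fun A => σ A (ρ.pref j)

/-- A play is compatible with the strategy of coalition `C` (move condition). -/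
def Compatible (C : Set Agt) (σ : Profile Stat Agt Act) (ρ : Play Stat Agt Act) : Prop :=
  ∀ j, ∀ A ∈ C, ρ.move j A = σ A (ρ.pref j)

/-- `Out_G(s, σ_C)`: plays of `G` starting at `s` compatible with `σ` on coalition `C`. -/
def OutFrom (G : CGame Stat Agt Act) (s : Stat) (C : Set Agt) (σ : Profile Stat Agt Act) :
    Set (Play Stat Agt Act) :=
  {ρ | ρ.state 0 = s ∧ IsPlay G ρ ∧ Compatible C σ ρ}

open Classical in
/-- The profile `(σ_{-C}, σ'_C)`: agrees with `σ'` on `C` and with `σ` outside `C`. -/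
noncomputable def combine (C : Set Agt) (σ σ' : Profile Stat Agt Act) : Profile Stat Agt Act :=
  fun A => if A ∈ C then σ' A else σ A

/-- Mean payoff of player `A` along a play. -/
noncomputable def payoffPlay (G : CGame Stat Agt Act) (A : Agt) (ρ : Play Stat Agt Act) : ℝ :=
  Filter.liminf
    (fun m => (∑ l ∈ Finset.range (m + 1), (G.w A (ρ.state l) : ℝ)) / (m : ℝ)) Filter.atTop

def histLast (h : Hist Stat Agt Act) : Stat := (h.2.map Prod.snd).getLastD h.1

/-- The history of length `m+1` produced by the strategy profile `σ` from `s0`. -/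
def outHist (G : CGame Stat Agt Act) (σ : Profile Stat Agt Act) : ℕ → Hist Stat Agt Act
  | 0 => (G.s0, [])
  | m + 1 =>
    let h := outHist G σ m
    (h.1, h.2 ++ [(fun A => σ A h, G.Tab (histLast h) fun A => σ A h)])

/-- The unique outcome of a full strategy profile from `s0`. -/
def outcomePlay (G : CGame Stat Agt Act) (σ : Profile Stat Agt Act) : Play Stat Agt Act :=
  ⟨fun m => histLast (outHist G σ m), fun m A => σ A (outHist G σ m)⟩

/-- The payoff vector of a strategy profile. -/
noncomputable def payoffProfile (G : CGame Stat Agt Act) (σ : Profile Stat Agt Act) (A : Agt) :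
    ℝ :=
  payoffPlay G A (outcomePlay G σ)

/-! The deviator game `D(G)`. -/

abbrev DState (Stat Agt : Type) := Stat × Set Agt

abbrev DHist (Stat Agt Act : Type) :=
  DState Stat Agt × List (((Agt → Act) × (Agt → Act)) × DState Stat Agt)

abbrev EveStrategy (Stat Agt Act : Type) := DHist Stat Agt Act → Agt → Act

/-- A play of the deviator game: states together with Eve's and Adam's moves. -/
structure DPlay (Stat Agt Act : Type) where
  state : ℕ → DState Stat Agt
  eveMove : ℕ → Agt → Act
  adamMove : ℕ → Agt → Act

/-- Transition function of the deviator game. -/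
def DTab (G : CGame Stat Agt Act) (q : DState Stat Agt) (a a' : Agt → Act) : DState Stat Agt :=
  (G.Tab q.1 a', q.2 ∪ devMove a a')

def DPlay.pref (ρ : DPlay Stat Agt Act) (m : ℕ) : DHist Stat Agt Act :=
  (ρ.state 0, (List.range m).map fun j => ((ρ.eveMove j, ρ.adamMove j), ρ.state (j + 1)))

/-- Projection of a history of `D(G)` to a history of `G` (first state component, Adam's move). -/
def projHist (h : DHist Stat Agt Act) : Hist Stat Agt Act :=
  (h.1.1, h.2.map fun x => (x.1.2, x.2.1))

/-- Projection `π` of a play of `D(G)` to a play of `G`. -/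
def projPlay (ρ : DPlay Stat Agt Act) : Play Stat Agt Act :=
  ⟨fun i => (ρ.state i).1, ρ.adamMove⟩

/-- The Eve strategy `π(σ_Agt)` associated with a strategy profile. -/
def eveOf (σ : Profile Stat Agt Act) : EveStrategy Stat Agt Act :=
  fun h A => σ A (projHist h)

/-- `δ(ρ)`: the limit of the deviator components along a play of `D(G)`. -/
def delta (ρ : DPlay Stat Agt Act) : Set Agt := ⋃ i : ℕ, (ρ.state i).2

/-- Play of the deviator game from state `q` where Eve follows `σE` and Adam is unconstrained. -/
def IsDPlayFrom (G : CGame Stat Agt Act) (q : DState Stat Agt) (σE : EveStrategy Stat Agt Act)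
    (ρ : DPlay Stat Agt Act) : Prop :=
  ρ.state 0 = q ∧
    ∀ j, ρ.eveMove j = σE (ρ.pref j) ∧
      ρ.state (j + 1) = DTab G (ρ.state j) (ρ.eveMove j) (ρ.adamMove j)

/-- Outcome of an Eve strategy from the initial state `(s0, ∅)` of `D(G)`. -/
def IsOutcome (G : CGame Stat Agt Act) (σE : EveStrategy Stat Agt Act)
    (ρ : DPlay Stat Agt Act) : Prop :=
  IsDPlayFrom G (G.s0, ∅) σE ρ

/-- An Eve strategy is winning for objective `Ω` if all its outcomes belong to `Ω`. -/
def Winning (G : CGame Stat Agt Act) (σE : EveStrategy Stat Agt Act)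
    (Ω : Set (DPlay Stat Agt Act)) : Prop :=
  ∀ ρ, IsOutcome G σE ρ → ρ ∈ Ω

/-- `σ` is `k`-resilient: `C`-resilient for every coalition `C` of size at most `k`. -/
def kResilient (G : CGame Stat Agt Act) (σ : Profile Stat Agt Act) (k : ℕ) : Prop :=
  ∀ C : Set Agt, C.ncard ≤ k → ∀ σ' : Profile Stat Agt Act, ∀ A ∈ C,
    payoffProfile G (combine C σ σ') A ≤ payoffProfile G σ A

/-- `σ` is `(t,r)`-immune: `(C,r)`-immune for every coalition `C` of size at most `t`. -/
def tImmune (G : CGame Stat Agt Act) (σ : Profile Stat Agt Act) (t : ℕ) (r : ℝ) : Prop :=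
  ∀ C : Set Agt, C.ncard ≤ t → ∀ σ' : Profile Stat Agt Act, ∀ A ∉ C,
    payoffProfile G σ A - r ≤ payoffProfile G (combine C σ σ') A

/-- The resilience objective `Re(k,p)`. -/
def ReObj (G : CGame Stat Agt Act) (k : ℕ) (p : Agt → ℝ) : Set (DPlay Stat Agt Act) :=
  {ρ | k < (delta ρ).ncard} ∪
    {ρ | (delta ρ).ncard = k ∧ ∀ A ∈ delta ρ, payoffPlay G A (projPlay ρ) ≤ p A} ∪
    {ρ | (delta ρ).ncard < k ∧ ∀ A : Agt, payoffPlay G A (projPlay ρ) ≤ p A}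

/-- The immunity objective `I(t,r,p)`. -/
def ImmObj (G : CGame Stat Agt Act) (t : ℕ) (r : ℝ) (p : Agt → ℝ) : Set (DPlay Stat Agt Act) :=
  {ρ | t < (delta ρ).ncard} ∪
    {ρ | ∀ A ∉ delta ρ, p A - r ≤ payoffPlay G A (projPlay ρ)}

/-- Mean payoff (liminf) of a weight function on states of `D(G)` along a play. -/
noncomputable def MP (u : DState Stat Agt → ℤ) (ρ : DPlay Stat Agt Act) : ℝ :=
  Filter.liminf
    (fun m => (∑ l ∈ Finset.range (m + 1), (u (ρ.state l) : ℝ)) / (m : ℝ)) Filter.atTop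

/-- Mean payoff (limsup) of a weight function on states of `D(G)` along a play. -/
noncomputable def MPSup (u : DState Stat Agt → ℤ) (ρ : DPlay Stat Agt Act) : ℝ :=
  Filter.limsup
    (fun m => (∑ l ∈ Finset.range (m + 1), (u (ρ.state l) : ℝ)) / (m : ℝ)) Filter.atTop

end Defs

section Weights

variable {Stat Act : Type} {n : ℕ}

/-- `W`: the maximal absolute value of the weights. -/
noncomputable def Wmax (G : CGame Stat (Fin n) Act) [Fintype Stat] : ℤ :=
  ((Finset.univ : Finset (Fin n × Stat)).sup fun x => (G.w x.1 x.2).natAbs : ℕ)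

open Classical in
/-- Dimension `i` (for `i ∈ [1,n]`) of the weight function `v`, used for immunity. -/
noncomputable def vImm (G : CGame Stat (Fin n) Act) [Fintype Stat] (t : ℕ) (i : Fin n)
    (q : DState Stat (Fin n)) : ℤ :=
  if q.2.ncard ≤ t ∧ i ∉ q.2 then G.w i q.1 else Wmax G

open Classical in
/-- Dimension `n + i` of the weight function `v`, used for resilience. -/
noncomputable def vRes (G : CGame Stat (Fin n) Act) [Fintype Stat] (k : ℕ) (i : Fin n)
    (q : DState Stat (Fin n)) : ℤ :=
  if q.2.ncard < k ∨ (q.2.ncard = k ∧ i ∈ q.2) then -(G.w i q.1) else Wmax G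

open Classical in
/-- Dimension `2n + i` of the weight function `v`, constraining the payoff with no deviation. -/
noncomputable def vPay (G : CGame Stat (Fin n) Act) [Fintype Stat] (i : Fin n)
    (q : DState Stat (Fin n)) : ℤ :=
  if q.2 = ∅ then G.w i q.1 else Wmax G

open Classical in
/-- Dimension `3n + i` of the weight function `v`, constraining the payoff with no deviation. -/
noncomputable def vPayNeg (G : CGame Stat (Fin n) Act) [Fintype Stat] (i : Fin n)
    (q : DState Stat (Fin n)) : ℤ :=
  if q.2 = ∅ then -(G.w i q.1) else Wmax G

end Weights


section Prelude

theorem my_limsup_neg (u : ℕ → ℝ) (l : Filter ℕ) :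
    limsup (fun x => -u x) l = - liminf u l := by
  rw [Filter.limsup_eq, Filter.liminf_eq, Real.sInf_def]
  have : -{a : ℝ | ∀ᶠ n in l, (fun x => -u x) n ≤ a} = {a : ℝ | ∀ᶠ n in l, a ≤ u n} := by
    ext b
    simp only [Set.mem_neg, Set.mem_setOf_eq, neg_le_neg_iff]
  rw [this]

noncomputable def avg (u : ℕ → ℝ) (m : ℕ) : ℝ := (∑ l ∈ Finset.range (m+1), u l) / (m:ℝ)

theorem avg_tendsto_const (u : ℕ → ℝ) (c : ℝ) (N : ℕ) (h : ∀ l, N ≤ l → u l = c) :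
    Tendsto (avg u) atTop (nhds c) := by
  set C := ∑ l ∈ Finset.range N, u l with hC
  have key : ∀ m : ℕ, N ≤ m → 1 ≤ m → avg u m = c + (C + (1 - (N:ℝ)) * c) / (m:ℝ) := by
    intro m hm hm0
    have hm1 : N ≤ m + 1 := by omega
    have hsum : (∑ l ∈ Finset.range (m+1), u l) = C + ((m:ℝ) + 1 - N) * c := by
      rw [← Finset.sum_range_add_sum_Ico u hm1, hC]
      congr 1
      rw [Finset.sum_congr rfl (fun x hx => h x (Finset.mem_Ico.mp hx).1), Finset.sum_const,
        Nat.card_Ico, nsmul_eq_mul]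
      congr 1
      push_cast [Nat.cast_sub hm1]
      ring
    have hmne : (m:ℝ) ≠ 0 := by positivity
    rw [avg, hsum]
    field_simp
    ring
  have h2 : Tendsto (fun m : ℕ => c + (C + (1 - (N:ℝ)) * c) / (m:ℝ)) atTop (nhds c) := by
    have := tendsto_const_nhds (x := c) (f := atTop (α := ℕ)) |>.add
      (tendsto_const_div_atTop_nhds_zero_nat (C + (1 - (N:ℝ)) * c))
    simpa using this
  apply h2.congr'
  filter_upwards [eventually_ge_atTop N, eventually_ge_atTop 1] with m hm hm1
  exact (key m hm hm1).symm

theorem abs_avg_le (u : ℕ → ℝ) (B : ℝ) (h : ∀ l, |u l| ≤ B) (m : ℕ) : |avg u m| ≤ 2 * B := by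
  have hB : 0 ≤ B := le_trans (abs_nonneg _) (h 0)
  rcases Nat.eq_zero_or_pos m with rfl | hm
  · simp [avg]
    positivity
  · have h1 : |∑ l ∈ Finset.range (m+1), u l| ≤ ((m:ℝ)+1) * B := by
      calc |∑ l ∈ Finset.range (m+1), u l| ≤ ∑ l ∈ Finset.range (m+1), |u l| :=
            Finset.abs_sum_le_sum_abs _ _
        _ ≤ ∑ l ∈ Finset.range (m+1), B := Finset.sum_le_sum (fun i _ => h i)
        _ = ((m:ℝ)+1) * B := by rw [Finset.sum_const, Finset.card_range, nsmul_eq_mul]; push_cast; ring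
    have hm' : (0:ℝ) < m := by exact_mod_cast hm
    rw [avg, abs_div, abs_of_pos hm']
    rw [div_le_iff₀ hm']
    have hm1 : (1:ℝ) ≤ m := by exact_mod_cast hm
    nlinarith

theorem avg_mono (u v : ℕ → ℝ) (h : ∀ l, u l ≤ v l) (m : ℕ) : avg u m ≤ avg v m := by
  exact div_le_div_of_nonneg_right (Finset.sum_le_sum fun i _ => h i) (Nat.cast_nonneg m)

theorem liminf_avg_le (u : ℕ → ℝ) (B : ℝ) (h : ∀ l, |u l| ≤ B) :
    liminf (avg u) atTop ≤ B := by
  have hB : 0 ≤ B := le_trans (abs_nonneg _) (h 0)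
  have hg : Tendsto (avg (fun _ => B)) atTop (nhds B) := avg_tendsto_const _ B 0 (fun _ _ => rfl)
  have hle : ∀ m, avg u m ≤ avg (fun _ => B) m :=
    avg_mono _ _ (fun l => le_of_abs_le (h l))
  calc liminf (avg u) atTop ≤ liminf (avg (fun _ => B)) atTop := by
        exact Filter.liminf_le_liminf (Eventually.of_forall hle)
          (isBoundedUnder_of ⟨-(2*B), fun (m : ℕ) => neg_le_of_abs_le (abs_avg_le u B h m)⟩)
          (hg.isBoundedUnder_le).isCoboundedUnder_ge
    _ = B := hg.liminf_eq

theorem neg_le_liminf_avg (u : ℕ → ℝ) (B : ℝ) (h : ∀ l, |u l| ≤ B) :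
    -B ≤ liminf (avg u) atTop := by
  have hg : Tendsto (avg (fun _ => -B)) atTop (nhds (-B)) := avg_tendsto_const _ (-B) 0 (fun _ _ => rfl)
  have hle : ∀ m, avg (fun _ => -B) m ≤ avg u m :=
    avg_mono _ _ (fun l => neg_le_of_abs_le (h l))
  calc -B = liminf (avg (fun _ => -B)) atTop := hg.liminf_eq.symm
    _ ≤ liminf (avg u) atTop := by
        exact Filter.liminf_le_liminf (Eventually.of_forall hle)
          hg.isBoundedUnder_ge
          ((isBoundedUnder_of ⟨2*B, fun (m : ℕ) => le_of_abs_le (abs_avg_le u B h m)⟩ :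
            IsBoundedUnder (· ≤ ·) atTop (avg u)).isCoboundedUnder_ge)

end Prelude

section GameLemmas

variable {Stat Agt Act : Type}

theorem Play.pref_zero (ρ : Play Stat Agt Act) : ρ.pref 0 = (ρ.state 0, []) := by
  simp [Play.pref]

theorem Play.pref_succ (ρ : Play Stat Agt Act) (m : ℕ) :
    ρ.pref (m+1) = ((ρ.pref m).1, (ρ.pref m).2 ++ [(ρ.move m, ρ.state (m+1))]) := by
  simp [Play.pref, List.range_succ]

theorem pref_snd_length (ρ : Play Stat Agt Act) (m : ℕ) : (ρ.pref m).2.length = m := by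
  simp [Play.pref]

theorem histLast_snoc (s : Stat) (l : List ((Agt → Act) × Stat)) (p : (Agt → Act) × Stat) :
    histLast ((s, l ++ [p]) : Hist Stat Agt Act) = p.2 := by
  simp [histLast]

theorem histLast_pref (ρ : Play Stat Agt Act) (m : ℕ) : histLast (ρ.pref m) = ρ.state m := by
  induction m with
  | zero => simp [Play.pref_zero, histLast]
  | succ m _ => rw [Play.pref_succ, histLast_snoc]

theorem outHist_succ (G : CGame Stat Agt Act) (τ : Profile Stat Agt Act) (m : ℕ) :
    outHist G τ m.succ = ((outHist G τ m).1, (outHist G τ m).2 ++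
      [(fun A => τ A (outHist G τ m),
        G.Tab (histLast (outHist G τ m)) fun A => τ A (outHist G τ m))]) := rfl

theorem outcome_state (G : CGame Stat Agt Act) (τ : Profile Stat Agt Act) (m : ℕ) :
    (outcomePlay G τ).state m = histLast (outHist G τ m) := rfl

theorem outcome_state_succ (G : CGame Stat Agt Act) (τ : Profile Stat Agt Act) (m : ℕ) :
    (outcomePlay G τ).state (m+1)
      = G.Tab (histLast (outHist G τ m)) (fun A => τ A (outHist G τ m)) := by
  rw [outcome_state, outHist_succ, histLast_snoc]

theorem outHist_eq_pref (G : CGame Stat Agt Act) (τ : Profile Stat Agt Act) (m : ℕ) :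
    outHist G τ m = (outcomePlay G τ).pref m := by
  induction m with
  | zero =>
    simp [outHist, Play.pref_zero, outcomePlay, histLast]
  | succ m ih =>
    rw [Play.pref_succ, ← ih, outcome_state_succ, outHist_succ]
    rfl

theorem outcome_state_zero (G : CGame Stat Agt Act) (τ : Profile Stat Agt Act) :
    (outcomePlay G τ).state 0 = G.s0 := by
  show histLast (outHist G τ 0) = G.s0
  simp [outHist, histLast]

theorem outcome_move (G : CGame Stat Agt Act) (τ : Profile Stat Agt Act) (m : ℕ) :
    (outcomePlay G τ).move m = fun A => τ A ((outcomePlay G τ).pref m) := by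
  show (fun A => τ A (outHist G τ m)) = _
  rw [outHist_eq_pref]

theorem outcome_isPlay (G : CGame Stat Agt Act) (τ : Profile Stat Agt Act) :
    IsPlay G (outcomePlay G τ) := by
  intro j
  rw [outcome_state_succ]
  rfl

theorem eq_outcomePlay (G : CGame Stat Agt Act) (τ : Profile Stat Agt Act)
    (ρG : Play Stat Agt Act) (h0 : ρG.state 0 = G.s0) (hp : IsPlay G ρG)
    (hm : ∀ j, ρG.move j = fun A => τ A (ρG.pref j)) : ρG = outcomePlay G τ := by
  have key : ∀ m, ρG.pref m = (outcomePlay G τ).pref m ∧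
      ρG.state m = (outcomePlay G τ).state m ∧ ρG.move m = (outcomePlay G τ).move m := by
    intro m
    induction m with
    | zero =>
      have h1 : ρG.pref 0 = (outcomePlay G τ).pref 0 := by
        rw [Play.pref_zero, Play.pref_zero, h0, outcome_state_zero]
      have h2 : ρG.state 0 = (outcomePlay G τ).state 0 := by rw [h0, outcome_state_zero]
      exact ⟨h1, h2, by rw [hm 0, outcome_move, h1]⟩
    | succ m ih =>
      obtain ⟨ih1, ih2, ih3⟩ := ih
      have h2 : ρG.state (m+1) = (outcomePlay G τ).state (m+1) := by
        rw [hp m, ih2, ih3, ← outcome_isPlay G τ m]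
      have h1 : ρG.pref (m+1) = (outcomePlay G τ).pref (m+1) := by
        rw [Play.pref_succ, Play.pref_succ, ih1, ih3, h2]
      exact ⟨h1, h2, by rw [hm (m+1), outcome_move, h1]⟩
  cases ρG with
  | mk st mv =>
    have h1 : st = (outcomePlay G τ).state := funext fun m => (key m).2.1
    have h2 : mv = (outcomePlay G τ).move := funext fun m => (key m).2.2
    rw [show outcomePlay G τ = ⟨(outcomePlay G τ).state, (outcomePlay G τ).move⟩ from rfl]
    exact Play.mk.injEq .. ▸ by exact ⟨h1, h2⟩

end GameLemmas

section DLemmas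

variable {Stat Agt Act : Type}

def dLast (h : DHist Stat Agt Act) : DState Stat Agt := (h.2.map Prod.snd).getLastD h.1

theorem DPlay.pref_zero (ρ : DPlay Stat Agt Act) : ρ.pref 0 = (ρ.state 0, []) := by
  simp [DPlay.pref]

theorem DPlay.pref_succ (ρ : DPlay Stat Agt Act) (m : ℕ) :
    ρ.pref (m+1) = ((ρ.pref m).1,
      (ρ.pref m).2 ++ [((ρ.eveMove m, ρ.adamMove m), ρ.state (m+1))]) := by
  simp [DPlay.pref, List.range_succ]

theorem dLast_snoc (s : DState Stat Agt) (l : List (((Agt → Act) × (Agt → Act)) × DState Stat Agt))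
    (p : ((Agt → Act) × (Agt → Act)) × DState Stat Agt) :
    dLast ((s, l ++ [p]) : DHist Stat Agt Act) = p.2 := by
  simp [dLast]

theorem dLast_pref (ρ : DPlay Stat Agt Act) (m : ℕ) : dLast (ρ.pref m) = ρ.state m := by
  induction m with
  | zero => simp [DPlay.pref_zero, dLast]
  | succ m _ => rw [DPlay.pref_succ, dLast_snoc]

theorem projHist_pref (ρ : DPlay Stat Agt Act) (m : ℕ) :
    projHist (ρ.pref m) = (projPlay ρ).pref m := by
  simp [projHist, DPlay.pref, projPlay, Play.pref, List.map_map]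

variable {G : CGame Stat Agt Act} {q : DState Stat Agt} {σE : EveStrategy Stat Agt Act}
  {ρ : DPlay Stat Agt Act}

theorem dev_mono (hρ : IsDPlayFrom G q σE ρ) {j j' : ℕ} (h : j ≤ j') :
    (ρ.state j).2 ⊆ (ρ.state j').2 := by
  have : ∀ i, (ρ.state i).2 ⊆ (ρ.state (i+1)).2 := by
    intro i
    rw [(hρ.2 i).2]
    exact Set.subset_union_left
  exact monotone_nat_of_le_succ (f := fun i => (ρ.state i).2) this h

theorem dev_subset_delta (j : ℕ) : (ρ.state j).2 ⊆ delta ρ :=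
  Set.subset_iUnion (fun i => (ρ.state i).2) j

theorem delta_stab [Finite Agt] (hρ : IsDPlayFrom G q σE ρ) :
    ∃ N, ∀ m, N ≤ m → (ρ.state m).2 = delta ρ := by
  classical
  have hfin : (delta ρ).Finite := Set.toFinite _
  have hex : ∀ A ∈ delta ρ, ∃ j, A ∈ (ρ.state j).2 := fun A hA => Set.mem_iUnion.mp hA
  set f : Agt → ℕ := fun A => if h : A ∈ delta ρ then (hex A h).choose else 0 with hf
  refine ⟨hfin.toFinset.sup f, fun m hm => ?_⟩
  apply subset_antisymm (dev_subset_delta m)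
  intro A hA
  have h1 : A ∈ (ρ.state (f A)).2 := by
    rw [hf]; simp only [dif_pos hA]; exact (hex A hA).choose_spec
  have h2 : f A ≤ m := le_trans (Finset.le_sup (hfin.mem_toFinset.mpr hA)) hm
  exact dev_mono hρ h2 h1

theorem adam_eq_eve_of_not_delta (hρ : IsDPlayFrom G q σE ρ) {A : Agt} (hA : A ∉ delta ρ)
    (j : ℕ) : ρ.adamMove j A = ρ.eveMove j A := by
  have h1 : A ∉ devMove (ρ.eveMove j) (ρ.adamMove j) := by
    intro hmem
    apply hA
    have : A ∈ (ρ.state (j+1)).2 := by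
      rw [(hρ.2 j).2]
      exact Set.mem_union_right _ hmem
    exact dev_subset_delta (j+1) this
  have h2 : ρ.eveMove j A = ρ.adamMove j A := by
    simpa [devMove, not_not] using h1
  exact h2.symm

theorem projPlay_state_zero (hρ : IsDPlayFrom G q σE ρ) : (projPlay ρ).state 0 = q.1 := by
  show (ρ.state 0).1 = q.1
  rw [hρ.1]

theorem projPlay_isPlay (hρ : IsDPlayFrom G q σE ρ) : IsPlay G (projPlay ρ) := by
  intro j
  show (ρ.state (j+1)).1 = G.Tab (ρ.state j).1 (ρ.adamMove j)
  rw [(hρ.2 j).2]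
  rfl

/-- Forward outcome lemma : out of an outcome of `eveOf σ`, recover a deviating profile. -/
theorem fwd_out (G : CGame Stat Agt Act) (σ : Profile Stat Agt Act)
    (hρ : IsOutcome G (eveOf σ) ρ) (C : Set Agt) (hC : delta ρ ⊆ C) :
    projPlay ρ = outcomePlay G
      (combine C σ (fun A h => ρ.adamMove h.2.length A)) := by
  classical
  apply eq_outcomePlay
  · exact projPlay_state_zero hρ
  · exact projPlay_isPlay hρ
  · intro j
    funext A
    show ρ.adamMove j A = _
    by_cases hAC : A ∈ C
    · rw [combine, if_pos hAC]
      show _ = ρ.adamMove ((projPlay ρ).pref j).2.length A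
      rw [pref_snd_length]
    · rw [combine, if_neg hAC]
      have hAd : A ∉ delta ρ := fun h => hAC (hC h)
      rw [adam_eq_eve_of_not_delta hρ hAd j, (hρ.2 j).1]
      show eveOf σ (ρ.pref j) A = _
      rw [eveOf, projHist_pref]

end DLemmas

section MPLemmas

variable {Stat Agt Act : Type}

theorem MP_eq_avg (u : DState Stat Agt → ℤ) (ρ : DPlay Stat Agt Act) :
    MP u ρ = liminf (avg (fun l => (u (ρ.state l) : ℝ))) atTop := rfl

theorem MPSup_eq_avg (u : DState Stat Agt → ℤ) (ρ : DPlay Stat Agt Act) :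
    MPSup u ρ = limsup (avg (fun l => (u (ρ.state l) : ℝ))) atTop := rfl

theorem payoffPlay_eq_avg (G : CGame Stat Agt Act) (A : Agt) (ρG : Play Stat Agt Act) :
    payoffPlay G A ρG = liminf (avg (fun l => (G.w A (ρG.state l) : ℝ))) atTop := rfl

theorem MP_congr_w {u : DState Stat Agt → ℤ} {ρ : DPlay Stat Agt Act} {G : CGame Stat Agt Act}
    {A : Agt} (h : ∀ l, u (ρ.state l) = G.w A ((ρ.state l).1)) :
    MP u ρ = payoffPlay G A (projPlay ρ) := by
  rw [MP_eq_avg, payoffPlay_eq_avg]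
  congr 1
  funext m
  rw [avg, avg]
  congr 1
  apply Finset.sum_congr rfl
  intro l _
  rw [h l]
  rfl

theorem MPSup_congr_neg_w {u : DState Stat Agt → ℤ} {ρ : DPlay Stat Agt Act}
    {G : CGame Stat Agt Act} {A : Agt}
    (h : ∀ l, u (ρ.state l) = -(G.w A ((ρ.state l).1))) :
    MPSup u ρ = -payoffPlay G A (projPlay ρ) := by
  rw [MPSup_eq_avg, payoffPlay_eq_avg]
  have key : avg (fun l => (u (ρ.state l) : ℝ))
      = fun m => -(avg (fun l => (G.w A ((projPlay ρ).state l) : ℝ)) m) := by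
    funext m
    rw [avg, avg, ← neg_div, ← Finset.sum_neg_distrib]
    congr 1
    apply Finset.sum_congr rfl
    intro l _
    rw [h l]
    push_cast
    rfl
  rw [key, my_limsup_neg]

theorem MP_const_of_eventually {u : DState Stat Agt → ℤ} {ρ : DPlay Stat Agt Act} (c : ℤ) (N : ℕ)
    (h : ∀ l, N ≤ l → u (ρ.state l) = c) :
    MP u ρ = (c : ℝ) ∧ MPSup u ρ = (c : ℝ) := by
  have ht : Tendsto (avg (fun l => (u (ρ.state l) : ℝ))) atTop (nhds (c : ℝ)) :=
    avg_tendsto_const _ _ N (fun l hl => by rw [h l hl])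
  exact ⟨by rw [MP_eq_avg]; exact ht.liminf_eq, by rw [MPSup_eq_avg]; exact ht.limsup_eq⟩

end MPLemmas

section WLemmas

variable {Stat Act : Type} {n : ℕ} [Fintype Stat]

theorem w_abs_le (G : CGame Stat (Fin n) Act) (A : Fin n) (s : Stat) :
    |(G.w A s : ℝ)| ≤ ((Wmax G : ℤ) : ℝ) := by
  have h1 : (G.w A s).natAbs ≤ ((Finset.univ : Finset (Fin n × Stat)).sup
      fun x => (G.w x.1 x.2).natAbs) :=
    Finset.le_sup (f := fun x : Fin n × Stat => (G.w x.1 x.2).natAbs) (Finset.mem_univ (A, s))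
  rw [Wmax]
  have h2 : |G.w A s| ≤ (((Finset.univ : Finset (Fin n × Stat)).sup
      fun x => (G.w x.1 x.2).natAbs : ℕ) : ℤ) := by
    rw [Int.abs_eq_natAbs]
    exact_mod_cast h1
  exact_mod_cast h2

theorem Wmax_nonneg (G : CGame Stat (Fin n) Act) : (0:ℝ) ≤ ((Wmax G : ℤ) : ℝ) := by
  rw [Wmax]
  positivity

theorem abs_payoffPlay_le (G : CGame Stat (Fin n) Act) (A : Fin n) (ρG : Play Stat (Fin n) Act) :
    |payoffPlay G A ρG| ≤ ((Wmax G : ℤ) : ℝ) := by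
  rw [abs_le, payoffPlay_eq_avg]
  constructor
  · exact neg_le_liminf_avg _ _ (fun l => w_abs_le G A (ρG.state l))
  · exact liminf_avg_le _ _ (fun l => w_abs_le G A (ρG.state l))

end WLemmas

section Track

variable {Stat Agt Act : Type}

def extendD (σE : EveStrategy Stat Agt Act) (d : DHist Stat Agt Act) (a : Agt → Act)
    (s' : Stat) : DHist Stat Agt Act :=
  (d.1, d.2 ++ [((σE d, a), (s', (dLast d).2 ∪ devMove (σE d) a))])

def goD (σE : EveStrategy Stat Agt Act) :
    DHist Stat Agt Act → List ((Agt → Act) × Stat) → DHist Stat Agt Act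
  | d, [] => d
  | d, x :: l => goD σE (extendD σE d x.1 x.2) l

def track (σE : EveStrategy Stat Agt Act) (h : Hist Stat Agt Act) : DHist Stat Agt Act :=
  goD σE ((h.1, ∅), []) h.2

theorem goD_append (σE : EveStrategy Stat Agt Act) (d : DHist Stat Agt Act)
    (l : List ((Agt → Act) × Stat)) (x : (Agt → Act) × Stat) :
    goD σE d (l ++ [x]) = extendD σE (goD σE d l) x.1 x.2 := by
  induction l generalizing d with
  | nil => rfl
  | cons y l ih => simp only [List.cons_append, goD]; exact ih _

theorem track_snoc (σE : EveStrategy Stat Agt Act) (s : Stat)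
    (l : List ((Agt → Act) × Stat)) (x : (Agt → Act) × Stat) :
    track σE (s, l ++ [x]) = extendD σE (track σE (s, l)) x.1 x.2 :=
  goD_append σE _ l x

variable (G : CGame Stat Agt Act) (σE : EveStrategy Stat Agt Act) (ρG : Play Stat Agt Act)

def liftE : ℕ → Agt → Act := fun m => σE (track σE (ρG.pref m))

def liftState : ℕ → DState Stat Agt
  | 0 => (G.s0, (∅ : Set Agt))
  | m + 1 => DTab G (liftState m) (liftE σE ρG m) (ρG.move m)

def liftD : DPlay Stat Agt Act := ⟨liftState G σE ρG, liftE σE ρG, ρG.move⟩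

theorem lift_pref (h0 : ρG.state 0 = G.s0) (hp : IsPlay G ρG) (m : ℕ) :
    (liftD G σE ρG).pref m = track σE (ρG.pref m) ∧
      (liftState G σE ρG m).1 = ρG.state m := by
  induction m with
  | zero =>
    refine ⟨?_, h0.symm⟩
    rw [DPlay.pref_zero, Play.pref_zero, h0]
    rfl
  | succ m ih =>
    obtain ⟨ih1, ih2⟩ := ih
    have hE2 : σE ((liftD G σE ρG).pref m) = liftE σE ρG m := by rw [ih1]; rfl
    have hdl : dLast ((liftD G σE ρG).pref m) = liftState G σE ρG m := dLast_pref _ m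
    have htr : track σE (ρG.pref (m+1))
        = extendD σE (track σE (ρG.pref m)) (ρG.move m) (ρG.state (m+1)) := by
      rw [Play.pref_succ]
      exact track_snoc σE (ρG.pref m).1 (ρG.pref m).2 (ρG.move m, ρG.state (m+1))
    have hst : liftState G σE ρG (m+1)
        = (ρG.state (m+1), (liftState G σE ρG m).2 ∪ devMove (liftE σE ρG m) (ρG.move m)) := by
      show DTab G (liftState G σE ρG m) (liftE σE ρG m) (ρG.move m) = _
      rw [DTab, ih2, hp m]
    refine ⟨?_, ?_⟩
    · rw [htr, ← ih1, DPlay.pref_succ, extendD, hE2, hdl]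
      show (_, _ ++ [((liftE σE ρG m, ρG.move m), liftState G σE ρG (m+1))]) = _
      rw [hst]
    · rw [hst]

theorem lift_isOutcome (h0 : ρG.state 0 = G.s0) (hp : IsPlay G ρG) :
    IsOutcome G σE (liftD G σE ρG) := by
  refine ⟨rfl, fun j => ⟨?_, rfl⟩⟩
  show liftE σE ρG j = σE ((liftD G σE ρG).pref j)
  rw [(lift_pref G σE ρG h0 hp j).1]
  rfl

theorem lift_proj (h0 : ρG.state 0 = G.s0) (hp : IsPlay G ρG) :
    projPlay (liftD G σE ρG) = ρG := by
  have h : ∀ m, (liftState G σE ρG m).1 = ρG.state m := fun m => (lift_pref G σE ρG h0 hp m).2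
  cases ρG with
  | mk st mv =>
    show Play.mk _ _ = _
    congr 1
    funext m
    exact h m

theorem lift_dev_subset (C : Set Agt)
    (hmov : ∀ j A, A ∉ C → ρG.move j A = liftE σE ρG j A) (m : ℕ) :
    (liftState G σE ρG m).2 ⊆ C := by
  induction m with
  | zero => exact Set.empty_subset C
  | succ m ih =>
    show (DTab G (liftState G σE ρG m) (liftE σE ρG m) (ρG.move m)).2 ⊆ C
    rw [DTab]
    apply Set.union_subset ih
    intro A hA
    by_contra hAC
    exact hA ((hmov m A hAC).symm)

theorem lift_delta_subset (C : Set Agt)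
    (hmov : ∀ j A, A ∉ C → ρG.move j A = liftE σE ρG j A) :
    delta (liftD G σE ρG) ⊆ C :=
  Set.iUnion_subset (fun m => lift_dev_subset G σE ρG C hmov m)

end Track


theorem statement11 {Stat Act : Type} {n : ℕ} [Fintype Stat] [Fintype Act]
    (G : CGame Stat (Fin n) Act) (k t : ℕ) (r : ℚ) :
    (∃ σ : Profile Stat (Fin n) Act, kResilient G σ k ∧ tImmune G σ t (r : ℝ)) ↔
      ∃ p : Fin n → ℝ, ∃ σE : EveStrategy Stat (Fin n) Act,
        ∀ ρ : DPlay Stat (Fin n) Act, IsOutcome G σE ρ →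
          ∀ i : Fin n,
            p i - (r : ℝ) ≤ MP (vImm G t i) ρ ∧
            -(p i) ≤ MPSup (vRes G k i) ρ ∧
            p i ≤ MP (vPay G i) ρ ∧
            -(p i) ≤ MPSup (vPayNeg G i) ρ := by
  classical
  constructor
  · rintro ⟨σ, hres, himm⟩
    refine ⟨payoffProfile G σ, eveOf σ, fun ρ hρ i => ?_⟩
    have hDfin : (delta ρ).Finite := Set.toFinite _
    have hsubD : ∀ m, (ρ.state m).2 ⊆ delta ρ := fun m => dev_subset_delta m
    obtain ⟨N, hN⟩ := delta_stab hρ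
    have hWnn := Wmax_nonneg G
    have habs : ∀ (A : Fin n) ρG, |payoffPlay G A ρG| ≤ ((Wmax G : ℤ) : ℝ) :=
      fun A ρG => abs_payoffPlay_le G A ρG
    have hple : payoffProfile G σ i ≤ ((Wmax G : ℤ) : ℝ) :=
      le_of_abs_le (habs i (outcomePlay G σ))
    have hpge : -((Wmax G : ℤ) : ℝ) ≤ payoffProfile G σ i :=
      neg_le_of_abs_le (habs i (outcomePlay G σ))
    have hcombempty : ∀ σ' : Profile Stat (Fin n) Act, combine ∅ σ σ' = σ := by
      intro σ'
      funext A h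
      rw [combine, if_neg (Set.notMem_empty A)]
    have hr0 : (0:ℝ) ≤ (r:ℝ) := by
      have h2 := himm ∅ (by simp) σ i (Set.notMem_empty i)
      rw [hcombempty] at h2
      linarith
    have hOut : ∀ C : Set (Fin n), delta ρ ⊆ C →
        payoffPlay G i (projPlay ρ)
          = payoffProfile G (combine C σ fun A h => ρ.adamMove h.2.length A) i := by
      intro C hC
      simp only [payoffProfile]
      rw [← fwd_out G σ hρ C hC]
    refine ⟨?_, ?_, ?_, ?_⟩
    · -- vImm
      by_cases hcase : (delta ρ).ncard ≤ t ∧ i ∉ delta ρ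
      · have hval : ∀ l, vImm G t i (ρ.state l) = G.w i ((ρ.state l).1) := by
          intro l
          rw [vImm]
          exact if_pos ⟨le_trans (Set.ncard_le_ncard (hsubD l) hDfin) hcase.1,
            fun h => hcase.2 (hsubD l h)⟩
        rw [MP_congr_w hval, hOut (delta ρ) subset_rfl]
        exact himm (delta ρ) hcase.1 _ i hcase.2
      · have hval : ∀ l, N ≤ l → vImm G t i (ρ.state l) = Wmax G := by
          intro l hl
          rw [vImm]
          apply if_neg
          rw [hN l hl]
          exact hcase
        rw [(MP_const_of_eventually _ N hval).1]
        linarith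
    · -- vRes
      by_cases hcase : (delta ρ).ncard < k ∨ ((delta ρ).ncard = k ∧ i ∈ delta ρ)
      · have hval : ∀ l, vRes G k i (ρ.state l) = -(G.w i ((ρ.state l).1)) := by
          intro l
          rw [vRes]
          apply if_pos
          rcases hcase with h1 | ⟨h1, h2⟩
          · exact Or.inl (lt_of_le_of_lt (Set.ncard_le_ncard (hsubD l) hDfin) h1)
          · rcases lt_or_eq_of_le (le_trans (Set.ncard_le_ncard (hsubD l) hDfin) h1.le)
              with h3 | h3
            · exact Or.inl h3
            · have h4 : (ρ.state l).2 = delta ρ :=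
                Set.eq_of_subset_of_ncard_le (hsubD l) (by rw [h3, h1]) hDfin
              exact Or.inr ⟨h3, h4 ▸ h2⟩
        rw [MPSup_congr_neg_w hval]
        have hCk : (insert i (delta ρ)).ncard ≤ k := by
          rcases hcase with h1 | ⟨h1, h2⟩
          · exact le_trans (Set.ncard_insert_le i (delta ρ)) (by omega)
          · rw [Set.insert_eq_self.mpr h2, h1]
        have hle := hres (insert i (delta ρ)) hCk (fun A h => ρ.adamMove h.2.length A) i
          (Set.mem_insert i (delta ρ))
        rw [← hOut _ (Set.subset_insert i (delta ρ))] at hle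
        linarith
      · have hval : ∀ l, N ≤ l → vRes G k i (ρ.state l) = Wmax G := by
          intro l hl
          rw [vRes]
          apply if_neg
          rw [hN l hl]
          exact hcase
        rw [(MP_const_of_eventually _ N hval).2]
        linarith
    · -- vPay
      by_cases hcase : delta ρ = ∅
      · have hst : ∀ l, (ρ.state l).2 = ∅ := fun l => Set.subset_eq_empty (hsubD l) hcase
        have hval : ∀ l, vPay G i (ρ.state l) = G.w i ((ρ.state l).1) := by
          intro l
          rw [vPay]
          exact if_pos (hst l)
        rw [MP_congr_w hval, hOut ∅ (by rw [hcase]), hcombempty]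
      · obtain ⟨A, hA⟩ := Set.nonempty_iff_ne_empty.mpr hcase
        obtain ⟨N0, hN0⟩ := Set.mem_iUnion.mp hA
        have hval : ∀ l, N0 ≤ l → vPay G i (ρ.state l) = Wmax G := by
          intro l hl
          rw [vPay]
          apply if_neg
          exact Set.nonempty_iff_ne_empty.mp ⟨A, dev_mono hρ hl hN0⟩
        rw [(MP_const_of_eventually _ N0 hval).1]
        linarith
    · -- vPayNeg
      by_cases hcase : delta ρ = ∅
      · have hst : ∀ l, (ρ.state l).2 = ∅ := fun l => Set.subset_eq_empty (hsubD l) hcase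
        have hval : ∀ l, vPayNeg G i (ρ.state l) = -(G.w i ((ρ.state l).1)) := by
          intro l
          rw [vPayNeg]
          exact if_pos (hst l)
        rw [MPSup_congr_neg_w hval, hOut ∅ (by rw [hcase]), hcombempty]
      · obtain ⟨A, hA⟩ := Set.nonempty_iff_ne_empty.mpr hcase
        obtain ⟨N0, hN0⟩ := Set.mem_iUnion.mp hA
        have hval : ∀ l, N0 ≤ l → vPayNeg G i (ρ.state l) = Wmax G := by
          intro l hl
          rw [vPayNeg]
          apply if_neg
          exact Set.nonempty_iff_ne_empty.mp ⟨A, dev_mono hρ hl hN0⟩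
        rw [(MP_const_of_eventually _ N0 hval).2]
        linarith
  · rintro ⟨p, σE, hwin⟩
    classical
    set σ : Profile Stat (Fin n) Act := fun A h => σE (track σE h) A with hσdef
    have hlift : ∀ τ : Profile Stat (Fin n) Act,
        IsOutcome G σE (liftD G σE (outcomePlay G τ)) ∧
          projPlay (liftD G σE (outcomePlay G τ)) = outcomePlay G τ :=
      fun τ => ⟨lift_isOutcome G σE _ (outcome_state_zero G τ) (outcome_isPlay G τ),
        lift_proj G σE _ (outcome_state_zero G τ) (outcome_isPlay G τ)⟩
    have hmov : ∀ (C : Set (Fin n)) (σ' : Profile Stat (Fin n) Act),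
        ∀ j (A : Fin n), A ∉ C → (outcomePlay G (combine C σ σ')).move j A
          = liftE σE (outcomePlay G (combine C σ σ')) j A := by
      intro C σ' j A hA
      have h1 := congrFun (outcome_move G (combine C σ σ') j) A
      rw [h1, combine, if_neg hA]
      rfl
    have hdelta : ∀ (C : Set (Fin n)) (σ' : Profile Stat (Fin n) Act),
        delta (liftD G σE (outcomePlay G (combine C σ σ'))) ⊆ C :=
      fun C σ' => lift_delta_subset _ _ _ C (hmov C σ')
    have hσmov : ∀ j (A : Fin n), (outcomePlay G σ).move j A
        = liftE σE (outcomePlay G σ) j A := by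
      intro j A
      have h1 := congrFun (outcome_move G σ j) A
      rw [h1]
      rfl
    have hσdev : ∀ m, (liftState G σE (outcomePlay G σ) m).2 ⊆ (∅ : Set (Fin n)) :=
      fun m => lift_dev_subset _ _ _ ∅ (fun j A _ => hσmov j A) m
    have hpeq : ∀ i : Fin n, payoffProfile G σ i = p i := by
      intro i
      obtain ⟨hout, hproj⟩ := hlift σ
      have h4 := hwin _ hout i
      have hemp : ∀ l, ((liftD G σE (outcomePlay G σ)).state l).2 = ∅ :=
        fun l => Set.subset_eq_empty (hσdev l) rfl
      have hvalP : ∀ l, vPay G i ((liftD G σE (outcomePlay G σ)).state l)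
          = G.w i (((liftD G σE (outcomePlay G σ)).state l).1) := by
        intro l
        rw [vPay]
        exact if_pos (hemp l)
      have hvalN : ∀ l, vPayNeg G i ((liftD G σE (outcomePlay G σ)).state l)
          = -(G.w i (((liftD G σE (outcomePlay G σ)).state l).1)) := by
        intro l
        rw [vPayNeg]
        exact if_pos (hemp l)
      have h5 := h4.2.2.1
      rw [MP_congr_w hvalP, hproj] at h5
      have h6 := h4.2.2.2
      rw [MPSup_congr_neg_w hvalN, hproj] at h6
      show payoffPlay G i (outcomePlay G σ) = p i
      linarith
    refine ⟨σ, ?_, ?_⟩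
    · intro C hC σ' A hA
      obtain ⟨hout, hproj⟩ := hlift (combine C σ σ')
      have hsubC : ∀ l, ((liftD G σE (outcomePlay G (combine C σ σ'))).state l).2 ⊆ C :=
        fun l => subset_trans (dev_subset_delta l) (hdelta C σ')
      have hval : ∀ l, vRes G k A ((liftD G σE (outcomePlay G (combine C σ σ'))).state l)
          = -(G.w A (((liftD G σE (outcomePlay G (combine C σ σ'))).state l).1)) := by
        intro l
        rw [vRes]
        apply if_pos
        have h1 : ((liftD G σE (outcomePlay G (combine C σ σ'))).state l).2.ncard ≤ C.ncard :=
          Set.ncard_le_ncard (hsubC l) (Set.toFinite C)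
        rcases lt_or_eq_of_le (le_trans h1 hC) with h3 | h3
        · exact Or.inl h3
        · have hCk : C.ncard = k := le_antisymm hC (h3 ▸ h1)
          have h4 : ((liftD G σE (outcomePlay G (combine C σ σ'))).state l).2 = C :=
            Set.eq_of_subset_of_ncard_le (hsubC l) (by rw [h3, hCk]) (Set.toFinite C)
          exact Or.inr ⟨h3, by rw [h4]; exact hA⟩
      have h6 := (hwin _ hout A).2.1
      rw [MPSup_congr_neg_w hval, hproj] at h6
      rw [hpeq A]
      show payoffPlay G A (outcomePlay G (combine C σ σ')) ≤ p A
      linarith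
    · intro C hC σ' A hA
      obtain ⟨hout, hproj⟩ := hlift (combine C σ σ')
      have hsubC : ∀ l, ((liftD G σE (outcomePlay G (combine C σ σ'))).state l).2 ⊆ C :=
        fun l => subset_trans (dev_subset_delta l) (hdelta C σ')
      have hval : ∀ l, vImm G t A ((liftD G σE (outcomePlay G (combine C σ σ'))).state l)
          = G.w A (((liftD G σE (outcomePlay G (combine C σ σ'))).state l).1) := by
        intro l
        rw [vImm]
        exact if_pos ⟨le_trans (Set.ncard_le_ncard (hsubC l) (Set.toFinite C)) hC,
          fun h => hA (hsubC l h)⟩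
      have h5 := (hwin _ hout A).1
      rw [MP_congr_w hval, hproj] at h5
      rw [hpeq A]
      exact h5
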